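/- Let (K,⊔,⊓,0,1) be a (possibly infinite) lattice semiring without divisors of 0 (a⊓b = 0 implies a = 0 or b = 0). Let δ > 0 and let π: Lit_A(τ) → K be a K-interpretation with the (k,δ)-extension property. Then for every formula ψ(x_1,…,x_i) ∈ FO^k(τ) and every tuple ā ∈ A^i of distinct elements, either (i) f^δ_ψ[ρ^π_ā] = π⟦ψ(ā)⟧ = 0, or (ii) both f^δ_ψ[ρ^π_ā] ≠ 0 and π⟦ψ(ā)⟧ ≠ 0, and f^δ_ψ[ρ^π_ā] ≤ π⟦ψ(ā)⟧ ⊔ δ ≤ f^δ_ψ[ρ^π_ā] ⊔ δ. -/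
import Mathlib


open MeasureTheory Filter Set
open scoped ENNReal BigOperators

/-- A (fully instantiated) literal over the relational vocabulary given by the
relation symbols `R` with arities `ar`, on the universe `A`: a relation symbol,
a tuple of arguments, and a polarity (`true` = positive atom, `false` = negated atom). -/
structure Lit (R : Type) (ar : R → ℕ) (A : Type) : Type where
  rel : R
  args : Fin (ar rel) → A
  pos : Bool

/-- A (fully instantiated) relational atom. -/
abbrev Atoms (R : Type) (ar : R → ℕ) (A : Type) : Type := (r : R) × (Fin (ar r) → A)

variable {R : Type} {ar : R → ℕ} {A B K : Type}

/-- Renaming of a literal along a map of universes. -/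
def Lit.map (f : A → B) (l : Lit R ar A) : Lit R ar B :=
  ⟨l.rel, fun j => f (l.args j), l.pos⟩

/-- A `K`-interpretation (or atomic type) is model-defining / consistent (w.r.t. the
zero element `z` of `K`) if out of each pair of complementary literals exactly one is
mapped to `z`. -/
def ModelDefining (z : K) (π : Lit R ar A → K) : Prop :=
  ∀ (r : R) (as : Fin (ar r) → A), (π ⟨r, as, true⟩ = z ↔ π ⟨r, as, false⟩ ≠ z)

/-- The atomic `m`-type realised by the tuple `a` in the interpretation `π`. -/
def typeOf {m : ℕ} (π : Lit R ar A → K) (a : Fin m → A) : Lit R ar (Fin m) → K :=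
  fun l => π (l.map a)

/-- The tuple `a` (of pairwise distinct elements) realises the atomic `m`-type `ρ` in `π`. -/
def Realizes {m : ℕ} (π : Lit R ar A → K) (a : Fin m → A) (ρ : Lit R ar (Fin m) → K) : Prop :=
  Function.Injective a ∧ typeOf π a = ρ

/-- The atomic `(m+1)`-type `ρp` extends the atomic `m`-type `ρ`. -/
def Extends {m : ℕ} (ρp : Lit R ar (Fin (m+1)) → K) (ρ : Lit R ar (Fin m) → K) : Prop :=
  ∀ l : Lit R ar (Fin m), ρp (l.map Fin.castSucc) = ρ l

/-- The `k`-extension property of an interpretation `π` (with zero element `z`). -/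
def ExtProp (z : K) (π : Lit R ar A → K) (k : ℕ) : Prop :=
  ∀ m, m < k → ∀ ρ : Lit R ar (Fin m) → K, ModelDefining z ρ →
    ∀ ρp : Lit R ar (Fin (m+1)) → K, ModelDefining z ρp → Extends ρp ρ →
      ∀ a : Fin m → A, Realizes π a ρ →
        ∃ b : A, b ∉ Set.range a ∧ Realizes π (Fin.snoc a b) ρp

/-- A sequence of extended nonnegative reals converges to `L` exponentially fast. -/
def ExpConv (f : ℕ → ℝ≥0∞) (L : ℝ≥0∞) : Prop :=
  ∃ C q : ℝ≥0∞, C ≠ ⊤ ∧ q < 1 ∧ ∀ n, f n ≤ L + C * q ^ n ∧ L ≤ f n + C * q ^ n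

/-- The interpretation determined by a sample point: each atom gets a pair
(value of positive literal, value of negated literal). -/
def interpOf (ω : Atoms R ar A → K × K) : Lit R ar A → K :=
  fun l => if l.pos then (ω ⟨l.rel, l.args⟩).1 else (ω ⟨l.rel, l.args⟩).2

/-- The per-atom distribution: with probability 1/2 the atom is true (its negation
gets value `z`, i.e. false, and its value is sampled from `p`), with probability 1/2
it is false (symmetrically). -/
noncomputable def atomMeasure [MeasurableSpace K] (z : K) (p : Measure K) : Measure (K × K) :=
  (2⁻¹ : ℝ≥0∞) • (Measure.map (fun j => (j, z)) p + Measure.map (fun j => (z, j)) p)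

/-- The distribution `μ_{n,p}` of random `K`-interpretations on universe `[n]`,
presented on the sample space assigning to each atom the pair of values of its
positive and negated literal. -/
noncomputable def muI [MeasurableSpace K] [Fintype R] (z : K) (p : Measure K) (n : ℕ) :
    Measure (Atoms R ar (Fin n) → K × K) :=
  Measure.pi fun _ => atomMeasure z p
/-- First-order formulae in negation normal form over the vocabulary `(R, ar)`,
written with the *excluding* quantifiers `∃≠` (`exq`) and `∀≠` (`allq`) which range
only over elements distinct from the values of all variables currently in scope. -/
inductive FOx (R : Type) (ar : R → ℕ) : ℕ → Type
  | eq   : {i : ℕ} → Fin i → Fin i → FOx R ar i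
  | ne   : {i : ℕ} → Fin i → Fin i → FOx R ar i
  | atom : {i : ℕ} → (r : R) → (Fin (ar r) → Fin i) → Bool → FOx R ar i
  | or   : {i : ℕ} → FOx R ar i → FOx R ar i → FOx R ar i
  | and  : {i : ℕ} → FOx R ar i → FOx R ar i → FOx R ar i
  | exq  : {i : ℕ} → FOx R ar (i+1) → FOx R ar i
  | allq : {i : ℕ} → FOx R ar (i+1) → FOx R ar i

/-- The width of a formula: the maximal number of variables simultaneously in scope.
A formula `ψ : FOx R ar i` with `ψ.width ≤ k` is a formula of the `k`-variable
fragment `FO^k`. -/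
def FOx.width : {i : ℕ} → FOx R ar i → ℕ
  | i, .eq _ _ => i
  | i, .ne _ _ => i
  | i, .atom _ _ _ => i
  | _, .or φ θ => max φ.width θ.width
  | _, .and φ θ => max φ.width θ.width
  | _, .exq φ => φ.width
  | _, .allq φ => φ.width

/-- Semantics of formulae with excluding quantifiers in a lattice semiring. -/
noncomputable def evalLx [DistribLattice K] [BoundedOrder K] [Fintype A] [DecidableEq A]
    (π : Lit R ar A → K) : {i : ℕ} → FOx R ar i → (Fin i → A) → K
  | _, .eq j l, v => if v j = v l then ⊤ else ⊥
  | _, .ne j l, v => if v j = v l then ⊥ else ⊤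
  | _, .atom r as pos, v => π ⟨r, fun j => v (as j), pos⟩
  | _, .or φ θ, v => evalLx π φ v ⊔ evalLx π θ v
  | _, .and φ θ, v => evalLx π φ v ⊓ evalLx π θ v
  | _, .exq φ, v => (Finset.univ.filter fun b : A => ∀ j, v j ≠ b).sup
      fun b => evalLx π φ (Fin.snoc v b)
  | _, .allq φ, v => (Finset.univ.filter fun b : A => ∀ j, v j ≠ b).inf
      fun b => evalLx π φ (Fin.snoc v b)

/-- Semantics of formulae with excluding quantifiers in a commutative semiring. -/
noncomputable def evalSx [CommSemiring K] [Fintype A] [DecidableEq A]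
    (π : Lit R ar A → K) : {i : ℕ} → FOx R ar i → (Fin i → A) → K
  | _, .eq j l, v => if v j = v l then 1 else 0
  | _, .ne j l, v => if v j = v l then 0 else 1
  | _, .atom r as pos, v => π ⟨r, fun j => v (as j), pos⟩
  | _, .or φ θ, v => evalSx π φ v + evalSx π θ v
  | _, .and φ θ, v => evalSx π φ v * evalSx π θ v
  | _, .exq φ, v => ∑ b ∈ (Finset.univ.filter fun b : A => ∀ j, v j ≠ b),
      evalSx π φ (Fin.snoc v b)
  | _, .allq φ, v => ∏ b ∈ (Finset.univ.filter fun b : A => ∀ j, v j ≠ b),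
      evalSx π φ (Fin.snoc v b)

/-- Extension of an assignment of values to the literals in variables `x_1, …, x_i`
to the literals in variables `x_1, …, x_{i+1}`: a literal not containing the new
variable keeps its value under `ρ`, a literal containing the new variable gets its
value from `s`. -/
def extendA {i : ℕ} (ρ : Lit R ar (Fin i) → K) (s : Lit R ar (Fin (i+1)) → K) :
    Lit R ar (Fin (i+1)) → K := fun l =>
  if h : ∀ j, l.args j ≠ Fin.last i
  then ρ ⟨l.rel, fun j => (l.args j).castPred (h j), l.pos⟩
  else s l

/-- Evaluation (in a lattice semiring `K`, with the distinguished element `ε` as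
value of `e`) of the polynomial `f_ψ` over the three-element semiring
`E = ({0,e,1}, +, ·)` associated with a formula `ψ` with excluding quantifiers:
at an existential quantifier we take the supremum over all consistent selector
functions of new literals into `{0,1}`, at a universal quantifier the infimum over
all consistent selector functions into `{0,e}` (selector functions are presented by
maps `s` from the new atoms to `Bool`, telling which of the two complementary
literals is nonzero; the value `f_ψ[ρ]` only depends on their action on the new
literals). -/
noncomputable def fEval [DistribLattice K] [BoundedOrder K] [Fintype R] [DecidableEq R]
    (ε : K) : {i : ℕ} → FOx R ar i → (Lit R ar (Fin i) → K) → K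
  | _, .eq j l, _ => if j = l then ⊤ else ⊥
  | _, .ne j l, _ => if j = l then ⊥ else ⊤
  | _, .atom r as pos, ρ => ρ ⟨r, as, pos⟩
  | _, .or φ θ, ρ => fEval ε φ ρ ⊔ fEval ε θ ρ
  | _, .and φ θ, ρ => fEval ε φ ρ ⊓ fEval ε θ ρ
  | i, .exq φ, ρ => Finset.univ.sup fun s : Atoms R ar (Fin (i+1)) → Bool =>
      fEval ε φ (extendA ρ fun l => if s ⟨l.rel, l.args⟩ = l.pos then ⊤ else ⊥)
  | i, .allq φ, ρ => Finset.univ.inf fun s : Atoms R ar (Fin (i+1)) → Bool =>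
      fEval ε φ (extendA ρ fun l => if s ⟨l.rel, l.args⟩ = l.pos then ε else ⊥)
/-- The smallest positive element `ε_K = ⨅ {j ∈ K : j ≠ 0}` of a finite lattice semiring. -/
noncomputable def epsK (K : Type) [DistribLattice K] [BoundedOrder K] [Fintype K]
    [DecidableEq K] : K :=
  (Finset.univ.filter fun j : K => j ≠ ⊥).inf id

/-- A literal over the variables `x_1, …, x_{m+1}` containing the new variable `x_{m+1}`. -/
def NewLit {m : ℕ} (l : Lit R ar (Fin (m+1))) : Prop := ∃ j, l.args j = Fin.last m

/-- `ρp` is a maximal extension of `ρ`: all new literals get values in `{0,1} = {⊥,⊤}`. -/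
def MaxExt [Lattice K] [BoundedOrder K] {m : ℕ}
    (ρp : Lit R ar (Fin (m+1)) → K) (ρ : Lit R ar (Fin m) → K) : Prop :=
  Extends ρp ρ ∧ ∀ l : Lit R ar (Fin (m+1)), NewLit l → (ρp l = ⊥ ∨ ρp l = ⊤)

/-- `ρm` is a `δ`-small extension of `ρ`: all new literals get values `≤ δ`. -/
def SmallExt [Lattice K] [BoundedOrder K] {m : ℕ} (δ : K)
    (ρm : Lit R ar (Fin (m+1)) → K) (ρ : Lit R ar (Fin m) → K) : Prop :=
  Extends ρm ρ ∧ ∀ l : Lit R ar (Fin (m+1)), NewLit l → ρm l ≤ δ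

/-- The `(k,δ)`-extension property: every maximal extension of the type of a tuple is
realised, and also some `δ`-small extension below it is realised. -/
def ExtPropKD [Lattice K] [BoundedOrder K] (π : Lit R ar A → K) (k : ℕ) (δ : K) : Prop :=
  ∀ m, m < k → ∀ a : Fin m → A, Function.Injective a →
    ∀ ρp : Lit R ar (Fin (m+1)) → K, ModelDefining ⊥ ρp → MaxExt ρp (typeOf π a) →
      (∃ b : A, b ∉ Set.range a ∧ typeOf π (Fin.snoc a b) = ρp) ∧
      (∃ c : A, c ∉ Set.range a ∧ ModelDefining ⊥ (typeOf π (Fin.snoc a c)) ∧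
        typeOf π (Fin.snoc a c) ≤ ρp ∧ SmallExt δ (typeOf π (Fin.snoc a c)) (typeOf π a))

/-- `p` is weakly `ε`-bounded. -/
def WeaklyBounded [Lattice K] [BoundedOrder K] [MeasurableSpace K]
    (p : Measure K) (ε : K) : Prop :=
  0 < p {ε} ∧ ∀ δ : K, δ ≠ ⊥ → ¬ ε ≤ δ → p {x : K | ⊥ < x ∧ x ≤ δ} = 0

/-- `p` is strictly `ε`-bounded. -/
def StrictlyBounded [Lattice K] [BoundedOrder K] [MeasurableSpace K]
    (p : Measure K) (ε : K) : Prop :=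
  (∀ ε' : K, ¬ WeaklyBounded p ε') ∧ p {x : K | ⊥ < x ∧ x ≤ ε} = 0 ∧
    ∀ δ : K, ε < δ → 0 < p {x : K | ⊥ < x ∧ x ≤ δ}

/-- `p` is `ε`-bounded on small semiring values. -/
def EpsBounded [Lattice K] [BoundedOrder K] [MeasurableSpace K]
    (p : Measure K) (ε : K) : Prop :=
  WeaklyBounded p ε ∨ StrictlyBounded p ε

/-- `δ ∈ K⁺` is `p`-relevant (w.r.t. the parameter `ε` of the `ε`-bounded measure `p`). -/
def PRelevant [Lattice K] [BoundedOrder K] [MeasurableSpace K]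
    (p : Measure K) (ε δ : K) : Prop :=
  δ ≠ ⊥ ∧ (ε < δ ∨ (0 < p {ε} ∧ δ = ε))

/-- An interval of `K`: a closed, open, or half-open order interval. -/
def IsInterval [Lattice K] (J : Set K) : Prop :=
  ∃ a b : K, J = Set.Icc a b ∨ J = Set.Ico a b ∨ J = Set.Ioc a b ∨ J = Set.Ioo a b

section Auxiliary

variable {R : Type} {ar : R → ℕ} {A K : Type}

lemma FOx.le_width : ∀ {i : ℕ} (φ : FOx R ar i), i ≤ φ.width
  | _, .eq _ _ => le_rfl
  | _, .ne _ _ => le_rfl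
  | _, .atom _ _ _ => le_rfl
  | _, .or φ θ => le_trans φ.le_width (le_max_left _ _)
  | _, .and φ θ => le_trans φ.le_width (le_max_left _ _)
  | _, .exq φ => le_trans (Nat.le_succ _) φ.le_width
  | _, .allq φ => le_trans (Nat.le_succ _) φ.le_width

lemma inf_eq_bot_exists [DistribLattice K] [BoundedOrder K]
    (hnzd : ∀ a b : K, a ⊓ b = ⊥ → a = ⊥ ∨ b = ⊥) (htb : (⊥ : K) ≠ ⊤)
    {ι : Type*} (s : Finset ι) (f : ι → K) (h : s.inf f = ⊥) : ∃ i ∈ s, f i = ⊥ := by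
  induction s using Finset.cons_induction with
  | empty => rw [Finset.inf_empty] at h; exact absurd h.symm htb
  | cons a s ha ih =>
    rw [Finset.inf_cons] at h
    rcases hnzd _ _ h with h1 | h2
    · exact ⟨a, Finset.mem_cons_self _ _, h1⟩
    · obtain ⟨i, hi, hfi⟩ := ih h2
      exact ⟨i, Finset.mem_cons_of_mem hi, hfi⟩

lemma finset_inf_eq_bot_iff [DistribLattice K] [BoundedOrder K]
    (hnzd : ∀ a b : K, a ⊓ b = ⊥ → a = ⊥ ∨ b = ⊥) (htb : (⊥ : K) ≠ ⊤)
    {ι : Type*} (s : Finset ι) (f : ι → K) : s.inf f = ⊥ ↔ ∃ i ∈ s, f i = ⊥ := by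
  constructor
  · exact inf_eq_bot_exists hnzd htb s f
  · rintro ⟨i, hi, hfi⟩
    exact le_bot_iff.mp (hfi ▸ Finset.inf_le hi)

lemma inf_eq_bot_iff' [DistribLattice K] [BoundedOrder K]
    (hnzd : ∀ a b : K, a ⊓ b = ⊥ → a = ⊥ ∨ b = ⊥) (x y : K) :
    x ⊓ y = ⊥ ↔ x = ⊥ ∨ y = ⊥ := by
  constructor
  · exact hnzd x y
  · rintro (rfl | rfl) <;> simp

lemma extendA_old {i : ℕ} (ρ : Lit R ar (Fin i) → K) (s : Lit R ar (Fin (i+1)) → K)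
    (l : Lit R ar (Fin (i+1))) (h : ∀ j, l.args j ≠ Fin.last i) :
    extendA ρ s l = ρ ⟨l.rel, fun j => (l.args j).castPred (h j), l.pos⟩ := dif_pos h

lemma extendA_new {i : ℕ} (ρ : Lit R ar (Fin i) → K) (s : Lit R ar (Fin (i+1)) → K)
    (l : Lit R ar (Fin (i+1))) (h : ¬ ∀ j, l.args j ≠ Fin.last i) :
    extendA ρ s l = s l := dif_neg h

lemma snoc_apply_ne_last {n : ℕ} (a : Fin n → A) (b : A) (x : Fin (n+1)) (h : x ≠ Fin.last n) :
    (Fin.snoc a b : Fin (n+1) → A) x = a (x.castPred h) := by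
  have h2 := @Fin.snoc_castSucc n (fun _ => A) b a (x.castPred h)
  rwa [Fin.castSucc_castPred] at h2

lemma typeOf_snoc_old {i : ℕ} (π : Lit R ar A → K) (a : Fin i → A) (b : A)
    (l : Lit R ar (Fin (i+1))) (h : ∀ j, l.args j ≠ Fin.last i) :
    typeOf π (Fin.snoc a b) l = typeOf π a ⟨l.rel, fun j => (l.args j).castPred (h j), l.pos⟩ := by
  have harg : (fun j => (Fin.snoc a b : Fin (i+1) → A) (l.args j)) = (fun j => a ((l.args j).castPred (h j))) := by
    funext j
    exact snoc_apply_ne_last a b (l.args j) (h j)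
  exact congrArg (fun f : Fin (ar l.rel) → A => π ⟨l.rel, f, l.pos⟩) harg

lemma typeOf_snoc_extends {i : ℕ} (π : Lit R ar A → K) (a : Fin i → A) (b : A) :
    Extends (typeOf π (Fin.snoc a b)) (typeOf π a) := by
  intro l
  simp only [typeOf, Lit.map, Fin.snoc_castSucc]

lemma extendA_extends {i : ℕ} (ρ : Lit R ar (Fin i) → K) (s : Lit R ar (Fin (i+1)) → K) :
    Extends (extendA ρ s) ρ := by
  intro l
  have h : ∀ j, (l.map Fin.castSucc).args j ≠ Fin.last i :=
    fun j => (Fin.castSucc_lt_last _).ne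
  rw [extendA_old _ _ _ h]
  have harg : (fun j => ((l.map Fin.castSucc).args j).castPred (h j)) = l.args := by
    funext j
    simp [Lit.map, Fin.castPred_castSucc]
  exact congrArg (fun f : Fin (ar l.rel) → Fin i => ρ ⟨l.rel, f, l.pos⟩) harg

lemma md_typeOf {m : ℕ} {π : Lit R ar A → K} {z : K} (hmd : ModelDefining z π)
    (v : Fin m → A) : ModelDefining z (typeOf π v) :=
  fun r as => hmd r (fun j => v (as j))

lemma snoc_injective {n : ℕ} {a : Fin n → A} {b : A}
    (ha : Function.Injective a) (hb : b ∉ Set.range a) :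
    Function.Injective (Fin.snoc a b : Fin (n+1) → A) := by
  intro x y hxy
  rcases Fin.eq_castSucc_or_eq_last x with ⟨x', rfl⟩ | rfl <;>
    rcases Fin.eq_castSucc_or_eq_last y with ⟨y', rfl⟩ | rfl
  · rw [Fin.snoc_castSucc, Fin.snoc_castSucc] at hxy
    exact congrArg _ (ha hxy)
  · rw [Fin.snoc_castSucc, Fin.snoc_last] at hxy
    exact absurd ⟨x', hxy⟩ hb
  · rw [Fin.snoc_castSucc, Fin.snoc_last] at hxy
    exact absurd ⟨y', hxy.symm⟩ hb
  · rfl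

lemma md_extendA {i : ℕ} (ρ : Lit R ar (Fin i) → K) {z : K} (hρ : ModelDefining z ρ)
    (s : Lit R ar (Fin (i+1)) → K)
    (hs : ∀ (r : R) (as : Fin (ar r) → Fin (i+1)), (¬ ∀ j, as j ≠ Fin.last i) →
      (s ⟨r, as, true⟩ = z ↔ s ⟨r, as, false⟩ ≠ z)) :
    ModelDefining z (extendA ρ s) := by
  intro r as
  by_cases h : ∀ j, as j ≠ Fin.last i
  · rw [extendA_old ρ s ⟨r, as, true⟩ h, extendA_old ρ s ⟨r, as, false⟩ h]
    exact hρ _ _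
  · rw [extendA_new ρ s ⟨r, as, true⟩ h, extendA_new ρ s ⟨r, as, false⟩ h]
    exact hs r as h

end Auxiliary
section FEvalLemmas

variable {R : Type} {ar : R → ℕ} {K : Type}
variable [DistribLattice K] [BoundedOrder K] [Fintype R] [DecidableEq R]

lemma fEval_le (ε c : K) :
    ∀ {i : ℕ} (φ : FOx R ar i) (ρ₁ ρ₂ : Lit R ar (Fin i) → K),
      (∀ l, ρ₁ l ≤ ρ₂ l ⊔ c) → fEval ε φ ρ₁ ≤ fEval ε φ ρ₂ ⊔ c := by
  intro i φ
  induction φ with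
  | eq j l => intro ρ₁ ρ₂ h; exact le_sup_left
  | ne j l => intro ρ₁ ρ₂ h; exact le_sup_left
  | atom r as pos => intro ρ₁ ρ₂ h; exact h _
  | or φ θ ihφ ihθ =>
    intro ρ₁ ρ₂ h
    simp only [fEval]
    calc fEval ε φ ρ₁ ⊔ fEval ε θ ρ₁
        ≤ (fEval ε φ ρ₂ ⊔ c) ⊔ (fEval ε θ ρ₂ ⊔ c) := sup_le_sup (ihφ _ _ h) (ihθ _ _ h)
      _ = (fEval ε φ ρ₂ ⊔ fEval ε θ ρ₂) ⊔ c := by rw [sup_sup_sup_comm, sup_idem]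
  | and φ θ ihφ ihθ =>
    intro ρ₁ ρ₂ h
    simp only [fEval]
    calc fEval ε φ ρ₁ ⊓ fEval ε θ ρ₁
        ≤ (fEval ε φ ρ₂ ⊔ c) ⊓ (fEval ε θ ρ₂ ⊔ c) := inf_le_inf (ihφ _ _ h) (ihθ _ _ h)
      _ = (fEval ε φ ρ₂ ⊓ fEval ε θ ρ₂) ⊔ c := (sup_inf_right _ _ _).symm
  | exq φ ih =>
    intro ρ₁ ρ₂ h
    simp only [fEval]
    apply Finset.sup_le
    intro s _
    refine le_trans
      (ih _ (extendA ρ₂ fun l => if s ⟨l.rel, l.args⟩ = l.pos then ⊤ else (⊥:K)) ?_)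
      (sup_le_sup_right (Finset.le_sup (f := fun s =>
        fEval ε φ (extendA ρ₂ fun l => if s ⟨l.rel, l.args⟩ = l.pos then ⊤ else (⊥:K)))
        (Finset.mem_univ s)) c)
    intro l
    by_cases hl : ∀ j, l.args j ≠ Fin.last _
    · rw [extendA_old _ _ _ hl, extendA_old _ _ _ hl]; exact h _
    · rw [extendA_new _ _ _ hl, extendA_new _ _ _ hl]; exact le_sup_left
  | allq φ ih =>
    intro ρ₁ ρ₂ h
    simp only [fEval]
    rw [Finset.inf_sup_distrib_right]
    apply Finset.le_inf
    intro s _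
    refine le_trans (Finset.inf_le (f := fun s =>
        fEval ε φ (extendA ρ₁ fun l => if s ⟨l.rel, l.args⟩ = l.pos then ε else (⊥:K)))
        (Finset.mem_univ s))
      (ih _ (extendA ρ₂ fun l => if s ⟨l.rel, l.args⟩ = l.pos then ε else (⊥:K)) ?_)
    intro l
    by_cases hl : ∀ j, l.args j ≠ Fin.last _
    · rw [extendA_old _ _ _ hl, extendA_old _ _ _ hl]; exact h _
    · rw [extendA_new _ _ _ hl, extendA_new _ _ _ hl]; exact le_sup_left

lemma fEval_mono (ε : K) {i : ℕ} (φ : FOx R ar i) (ρ₁ ρ₂ : Lit R ar (Fin i) → K)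
    (h : ∀ l, ρ₁ l ≤ ρ₂ l) : fEval ε φ ρ₁ ≤ fEval ε φ ρ₂ := by
  have := fEval_le ε ⊥ φ ρ₁ ρ₂ (fun l => le_trans (h l) le_sup_left)
  simpa using this

lemma fEval_bot_congr (hnzd : ∀ a b : K, a ⊓ b = ⊥ → a = ⊥ ∨ b = ⊥)
    (htb : (⊥ : K) ≠ ⊤) (ε : K) :
    ∀ {i : ℕ} (φ : FOx R ar i) (ρ₁ ρ₂ : Lit R ar (Fin i) → K),
      (∀ l, ρ₁ l = ⊥ ↔ ρ₂ l = ⊥) → (fEval ε φ ρ₁ = ⊥ ↔ fEval ε φ ρ₂ = ⊥) := by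
  intro i φ
  induction φ with
  | eq j l => intro ρ₁ ρ₂ h; exact Iff.rfl
  | ne j l => intro ρ₁ ρ₂ h; exact Iff.rfl
  | atom r as pos => intro ρ₁ ρ₂ h; exact h _
  | or φ θ ihφ ihθ =>
    intro ρ₁ ρ₂ h
    simp only [fEval, sup_eq_bot_iff]
    exact and_congr (ihφ _ _ h) (ihθ _ _ h)
  | and φ θ ihφ ihθ =>
    intro ρ₁ ρ₂ h
    simp only [fEval]
    rw [inf_eq_bot_iff' hnzd, inf_eq_bot_iff' hnzd]
    exact or_congr (ihφ _ _ h) (ihθ _ _ h)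
  | exq φ ih =>
    intro ρ₁ ρ₂ h
    simp only [fEval, Finset.sup_eq_bot_iff]
    refine forall₂_congr fun s _ => ih _ _ ?_
    intro l
    by_cases hl : ∀ j, l.args j ≠ Fin.last _
    · rw [extendA_old _ _ _ hl, extendA_old _ _ _ hl]; exact h _
    · rw [extendA_new _ _ _ hl, extendA_new _ _ _ hl]
  | allq φ ih =>
    intro ρ₁ ρ₂ h
    simp only [fEval]
    rw [finset_inf_eq_bot_iff hnzd htb, finset_inf_eq_bot_iff hnzd htb]
    refine exists_congr fun s => and_congr_right fun _ => ih _ _ ?_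
    intro l
    by_cases hl : ∀ j, l.args j ≠ Fin.last _
    · rw [extendA_old _ _ _ hl, extendA_old _ _ _ hl]; exact h _
    · rw [extendA_new _ _ _ hl, extendA_new _ _ _ hl]

end FEvalLemmas
section MainLemma

variable {R : Type} [Fintype R] [DecidableEq R] {ar : R → ℕ}
variable {K : Type} [DistribLattice K] [BoundedOrder K]
variable {A : Type} [Fintype A] [DecidableEq A]

open Classical in
/-- The support selector of an atomic `(i+1)`-type. -/
noncomputable def selOf {i : ℕ} (τ : Lit R ar (Fin (i+1)) → K) : Atoms R ar (Fin (i+1)) → Bool :=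
  fun p => if τ ⟨p.1, p.2, true⟩ = ⊥ then false else true

lemma selOf_cond {i : ℕ} (τ : Lit R ar (Fin (i+1)) → K) (hτ : ModelDefining ⊥ τ)
    (l : Lit R ar (Fin (i+1))) : (selOf τ ⟨l.rel, l.args⟩ = l.pos ↔ τ l ≠ ⊥) := by
  obtain ⟨r, as, pos⟩ := l
  have hmd := hτ r as
  cases pos
  · by_cases h : τ ⟨r, as, true⟩ = ⊥
    · simp [selOf, h, hmd.mp h]
    · have hneg : τ ⟨r, as, false⟩ = ⊥ := not_not.mp (fun hc => h (hmd.mpr hc))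
      simp [selOf, h, hneg]
  · by_cases h : τ ⟨r, as, true⟩ = ⊥ <;> simp [selOf, h]

lemma sel_md {i : ℕ} (ε : K) (hε : ε ≠ ⊥) (sel : Atoms R ar (Fin (i+1)) → Bool)
    (r : R) (as : Fin (ar r) → Fin (i+1)) :
    ((if sel ⟨r, as⟩ = true then ε else (⊥:K)) = ⊥ ↔
      (if sel ⟨r, as⟩ = false then ε else (⊥:K)) ≠ ⊥) := by
  cases hse : sel ⟨r, as⟩ <;> simp [hε]

lemma sel_maxExt {i : ℕ} (ρ : Lit R ar (Fin i) → K) (sel : Atoms R ar (Fin (i+1)) → Bool) :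
    MaxExt (extendA ρ fun l => if sel ⟨l.rel, l.args⟩ = l.pos then (⊤:K) else ⊥) ρ := by
  refine ⟨extendA_extends _ _, ?_⟩
  intro l hl
  have h : ¬ ∀ j, l.args j ≠ Fin.last i := by
    obtain ⟨j, hj⟩ := hl; exact fun h' => h' j hj
  rw [extendA_new _ _ _ h]
  split <;> simp

theorem key_lemma
    (hnzd : ∀ a b : K, a ⊓ b = ⊥ → a = ⊥ ∨ b = ⊥)
    (k : ℕ) (δ : K) (hδ : ⊥ < δ)
    (π : Lit R ar A → K) (hmd : ModelDefining (⊥ : K) π) (hext : ExtPropKD π k δ)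
    {i : ℕ} (ψ : FOx R ar i) :
    ψ.width ≤ k → ∀ a : Fin i → A, Function.Injective a →
      ((fEval δ ψ (typeOf π a) = ⊥ ↔ evalLx π ψ a = ⊥) ∧
       fEval δ ψ (typeOf π a) ≤ evalLx π ψ a ⊔ δ ∧
       evalLx π ψ a ≤ fEval δ ψ (typeOf π a) ⊔ δ) := by
  have hδ' : δ ≠ ⊥ := hδ.ne'
  have htb : (⊥ : K) ≠ ⊤ := (lt_of_lt_of_le hδ le_top).ne
  induction ψ with
  | @eq i j l =>
    intro hw a ha
    have he : evalLx π (FOx.eq j l) a = fEval δ (FOx.eq j l) (typeOf π a) := by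
      simp only [evalLx, fEval]
      by_cases hjl : j = l
      · simp [hjl]
      · rw [if_neg (fun h => hjl (ha h)), if_neg hjl]
    rw [he]
    exact ⟨Iff.rfl, le_sup_left, le_sup_left⟩
  | @ne i j l =>
    intro hw a ha
    have he : evalLx π (FOx.ne j l) a = fEval δ (FOx.ne j l) (typeOf π a) := by
      simp only [evalLx, fEval]
      by_cases hjl : j = l
      · simp [hjl]
      · rw [if_neg (fun h => hjl (ha h)), if_neg hjl]
    rw [he]
    exact ⟨Iff.rfl, le_sup_left, le_sup_left⟩
  | atom r as pos =>
    intro hw a ha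
    exact ⟨Iff.rfl, le_sup_left, le_sup_left⟩
  | or φ θ ihφ ihθ =>
    intro hw a ha
    have hw' : max φ.width θ.width ≤ k := hw
    obtain ⟨h1, h2, h3⟩ := ihφ (le_trans (le_max_left _ _) hw') a ha
    obtain ⟨g1, g2, g3⟩ := ihθ (le_trans (le_max_right _ _) hw') a ha
    simp only [fEval, evalLx]
    refine ⟨?_, ?_, ?_⟩
    · rw [sup_eq_bot_iff, sup_eq_bot_iff]; exact and_congr h1 g1
    · calc fEval δ φ (typeOf π a) ⊔ fEval δ θ (typeOf π a)
          ≤ (evalLx π φ a ⊔ δ) ⊔ (evalLx π θ a ⊔ δ) := sup_le_sup h2 g2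
        _ = (evalLx π φ a ⊔ evalLx π θ a) ⊔ δ := by rw [sup_sup_sup_comm, sup_idem]
    · calc evalLx π φ a ⊔ evalLx π θ a
          ≤ (fEval δ φ (typeOf π a) ⊔ δ) ⊔ (fEval δ θ (typeOf π a) ⊔ δ) := sup_le_sup h3 g3
        _ = (fEval δ φ (typeOf π a) ⊔ fEval δ θ (typeOf π a)) ⊔ δ := by
            rw [sup_sup_sup_comm, sup_idem]
  | and φ θ ihφ ihθ =>
    intro hw a ha
    have hw' : max φ.width θ.width ≤ k := hw
    obtain ⟨h1, h2, h3⟩ := ihφ (le_trans (le_max_left _ _) hw') a ha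
    obtain ⟨g1, g2, g3⟩ := ihθ (le_trans (le_max_right _ _) hw') a ha
    simp only [fEval, evalLx]
    refine ⟨?_, ?_, ?_⟩
    · rw [inf_eq_bot_iff' hnzd, inf_eq_bot_iff' hnzd]; exact or_congr h1 g1
    · calc fEval δ φ (typeOf π a) ⊓ fEval δ θ (typeOf π a)
          ≤ (evalLx π φ a ⊔ δ) ⊓ (evalLx π θ a ⊔ δ) := inf_le_inf h2 g2
        _ = (evalLx π φ a ⊓ evalLx π θ a) ⊔ δ := (sup_inf_right _ _ _).symm
    · calc evalLx π φ a ⊓ evalLx π θ a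
          ≤ (fEval δ φ (typeOf π a) ⊔ δ) ⊓ (fEval δ θ (typeOf π a) ⊔ δ) := inf_le_inf h3 g3
        _ = (fEval δ φ (typeOf π a) ⊓ fEval δ θ (typeOf π a)) ⊔ δ := (sup_inf_right _ _ _).symm
  | @exq i φ ih =>
    intro hw a ha
    have hwφ : φ.width ≤ k := hw
    have hik : i < k := lt_of_lt_of_le (Nat.lt_of_succ_le (FOx.le_width φ)) hwφ
    have memFb : ∀ b : A, (∀ j, a j ≠ b) → b ∉ Set.range a := by
      rintro b hb ⟨j, hj⟩; exact hb j hj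
    have memFb' : ∀ b : A, b ∉ Set.range a → (∀ j, a j ≠ b) := by
      intro b hb j hj; exact hb ⟨j, hj⟩
    have hmemF : ∀ b : A, b ∉ Set.range a →
        b ∈ Finset.filter (fun b : A => ∀ j, a j ≠ b) Finset.univ :=
      fun b hb => Finset.mem_filter.mpr ⟨Finset.mem_univ _, memFb' b hb⟩
    have hsel : ∀ sel : Atoms R ar (Fin (i+1)) → Bool, ∃ b : A, b ∉ Set.range a ∧
        typeOf π (Fin.snoc a b) =
          extendA (typeOf π a) (fun l => if sel ⟨l.rel, l.args⟩ = l.pos then (⊤:K) else ⊥) :=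
      fun sel => (hext i hik a ha _
        (md_extendA _ (md_typeOf hmd a) _ (fun r as _ => sel_md ⊤ htb.symm sel r as))
        (sel_maxExt _ sel)).1
    have hUp : ∀ b : A, b ∉ Set.range a → ∀ l : Lit R ar (Fin (i+1)),
        typeOf π (Fin.snoc a b) l ≤ extendA (typeOf π a)
          (fun l => if selOf (typeOf π (Fin.snoc a b)) ⟨l.rel, l.args⟩ = l.pos
            then (⊤:K) else ⊥) l := by
      intro b hb l
      by_cases hl : ∀ j, l.args j ≠ Fin.last i
      · rw [extendA_old _ _ _ hl, typeOf_snoc_old π a b l hl]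
      · rw [extendA_new _ _ _ hl]
        by_cases hz : typeOf π (Fin.snoc a b) l = ⊥
        · rw [hz]; exact bot_le
        · rw [if_pos ((selOf_cond _ (md_typeOf hmd _) l).mpr hz)]
          exact le_top
    simp only [fEval, evalLx]
    refine ⟨?_, ?_, ?_⟩
    · rw [Finset.sup_eq_bot_iff, Finset.sup_eq_bot_iff]
      constructor
      · intro hF b hbmem
        have hb : b ∉ Set.range a := memFb b (Finset.mem_filter.mp hbmem).2
        obtain ⟨hiff, _, _⟩ := ih hwφ _ (snoc_injective ha hb)
        apply hiff.mp
        apply le_bot_iff.mp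
        exact le_trans (fEval_mono δ φ _ _ (hUp b hb)) (le_of_eq (hF _ (Finset.mem_univ _)))
      · intro hE sel _
        obtain ⟨b, hb, hτ⟩ := hsel sel
        obtain ⟨hiff, _, _⟩ := ih hwφ _ (snoc_injective ha hb)
        rw [← hτ]
        exact hiff.mpr (hE b (hmemF b hb))
    · apply Finset.sup_le
      intro sel _
      obtain ⟨b, hb, hτ⟩ := hsel sel
      obtain ⟨_, h2, _⟩ := ih hwφ _ (snoc_injective ha hb)
      rw [← hτ]
      exact le_trans h2 (sup_le_sup_right
        (Finset.le_sup (f := fun b' : A => evalLx π φ (Fin.snoc a b')) (hmemF b hb)) δ)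
    · apply Finset.sup_le
      intro b hbmem
      have hb : b ∉ Set.range a := memFb b (Finset.mem_filter.mp hbmem).2
      obtain ⟨_, _, h3⟩ := ih hwφ _ (snoc_injective ha hb)
      refine le_trans h3 (sup_le_sup_right ?_ δ)
      exact le_trans (fEval_mono δ φ _ _ (hUp b hb))
        (Finset.le_sup (f := fun sel : Atoms R ar (Fin (i+1)) → Bool =>
          fEval δ φ (extendA (typeOf π a)
            fun l => if sel ⟨l.rel, l.args⟩ = l.pos then (⊤:K) else ⊥))
          (Finset.mem_univ (selOf (typeOf π (Fin.snoc a b)))))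
  | @allq i φ ih =>
    intro hw a ha
    have hwφ : φ.width ≤ k := hw
    have hik : i < k := lt_of_lt_of_le (Nat.lt_of_succ_le (FOx.le_width φ)) hwφ
    have memFb : ∀ b : A, (∀ j, a j ≠ b) → b ∉ Set.range a := by
      rintro b hb ⟨j, hj⟩; exact hb j hj
    have memFb' : ∀ b : A, b ∉ Set.range a → (∀ j, a j ≠ b) := by
      intro b hb j hj; exact hb ⟨j, hj⟩
    have hmemF : ∀ b : A, b ∉ Set.range a →
        b ∈ Finset.filter (fun b : A => ∀ j, a j ≠ b) Finset.univ :=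
      fun b hb => Finset.mem_filter.mpr ⟨Finset.mem_univ _, memFb' b hb⟩
    have hsel : ∀ sel : Atoms R ar (Fin (i+1)) → Bool, ∃ c : A, c ∉ Set.range a ∧
        ModelDefining ⊥ (typeOf π (Fin.snoc a c)) ∧
        typeOf π (Fin.snoc a c) ≤
          extendA (typeOf π a) (fun l => if sel ⟨l.rel, l.args⟩ = l.pos then (⊤:K) else ⊥) ∧
        SmallExt δ (typeOf π (Fin.snoc a c)) (typeOf π a) :=
      fun sel => (hext i hik a ha _
        (md_extendA _ (md_typeOf hmd a) _ (fun r as _ => sel_md ⊤ htb.symm sel r as))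
        (sel_maxExt _ sel)).2
    have hDown : ∀ (sel : Atoms R ar (Fin (i+1)) → Bool) (c : A),
        typeOf π (Fin.snoc a c) ≤
          extendA (typeOf π a) (fun l => if sel ⟨l.rel, l.args⟩ = l.pos then (⊤:K) else ⊥) →
        SmallExt δ (typeOf π (Fin.snoc a c)) (typeOf π a) →
        ∀ l : Lit R ar (Fin (i+1)), typeOf π (Fin.snoc a c) l ≤
          extendA (typeOf π a) (fun l => if sel ⟨l.rel, l.args⟩ = l.pos then δ else ⊥) l := by
      intro sel c hle hsmall l
      by_cases hl : ∀ j, l.args j ≠ Fin.last i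
      · rw [extendA_old _ _ _ hl, typeOf_snoc_old π a c l hl]
      · rw [extendA_new _ _ _ hl]
        have hnew : NewLit l := by push_neg at hl; exact hl
        by_cases hc : sel ⟨l.rel, l.args⟩ = l.pos
        · rw [if_pos hc]; exact hsmall.2 l hnew
        · rw [if_neg hc]
          have h2 := hle l
          rwa [extendA_new _ _ _ hl, if_neg hc] at h2
    have hLip : ∀ (sel : Atoms R ar (Fin (i+1)) → Bool) (b : A),
        ∀ l : Lit R ar (Fin (i+1)),
          extendA (typeOf π a) (fun l => if sel ⟨l.rel, l.args⟩ = l.pos then δ else ⊥) l ≤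
            typeOf π (Fin.snoc a b) l ⊔ δ := by
      intro sel b l
      by_cases hl : ∀ j, l.args j ≠ Fin.last i
      · rw [extendA_old _ _ _ hl, typeOf_snoc_old π a b l hl]; exact le_sup_left
      · rw [extendA_new _ _ _ hl]
        split
        · exact le_sup_right
        · exact bot_le
    have hZero : ∀ b : A, b ∉ Set.range a → ∀ l : Lit R ar (Fin (i+1)),
        (extendA (typeOf π a) (fun l => if selOf (typeOf π (Fin.snoc a b)) ⟨l.rel, l.args⟩ = l.pos
          then δ else ⊥) l = ⊥ ↔ typeOf π (Fin.snoc a b) l = ⊥) := by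
      intro b hb l
      by_cases hl : ∀ j, l.args j ≠ Fin.last i
      · rw [extendA_old _ _ _ hl, typeOf_snoc_old π a b l hl]
      · rw [extendA_new _ _ _ hl]
        by_cases hz : typeOf π (Fin.snoc a b) l = ⊥
        · rw [if_neg (fun hc => ((selOf_cond _ (md_typeOf hmd _) l).mp hc) hz)]
          simp [hz]
        · rw [if_pos ((selOf_cond _ (md_typeOf hmd _) l).mpr hz)]
          simp [hδ', hz]
    simp only [fEval, evalLx]
    refine ⟨?_, ?_, ?_⟩
    · rw [finset_inf_eq_bot_iff hnzd htb, finset_inf_eq_bot_iff hnzd htb]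
      constructor
      · rintro ⟨sel, -, hFs⟩
        obtain ⟨c, hc, hcmd, hcle, hcsmall⟩ := hsel sel
        obtain ⟨hiff, _, _⟩ := ih hwφ _ (snoc_injective ha hc)
        refine ⟨c, hmemF c hc, ?_⟩
        apply hiff.mp
        apply le_bot_iff.mp
        exact le_trans (fEval_mono δ φ _ _ (hDown sel c hcle hcsmall)) hFs.le
      · rintro ⟨b, hbmem, hEb⟩
        have hb : b ∉ Set.range a := memFb b (Finset.mem_filter.mp hbmem).2
        obtain ⟨hiff, _, _⟩ := ih hwφ _ (snoc_injective ha hb)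
        refine ⟨selOf (typeOf π (Fin.snoc a b)), Finset.mem_univ _, ?_⟩
        rw [fEval_bot_congr hnzd htb δ φ _ _ (hZero b hb)]
        exact hiff.mpr hEb
    · rw [Finset.inf_sup_distrib_right]
      apply Finset.le_inf
      intro b hbmem
      have hb : b ∉ Set.range a := memFb b (Finset.mem_filter.mp hbmem).2
      obtain ⟨_, h2, _⟩ := ih hwφ _ (snoc_injective ha hb)
      refine le_trans (Finset.inf_le
        (Finset.mem_univ (fun _ => true : Atoms R ar (Fin (i+1)) → Bool))) ?_
      refine le_trans (fEval_le δ δ φ _ _ (hLip (fun _ => true) b)) ?_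
      calc fEval δ φ (typeOf π (Fin.snoc a b)) ⊔ δ
          ≤ (evalLx π φ (Fin.snoc a b) ⊔ δ) ⊔ δ := sup_le_sup_right h2 δ
        _ = evalLx π φ (Fin.snoc a b) ⊔ δ := by rw [sup_assoc, sup_idem]
    · rw [Finset.inf_sup_distrib_right]
      apply Finset.le_inf
      intro sel _
      obtain ⟨c, hc, hcmd, hcle, hcsmall⟩ := hsel sel
      obtain ⟨_, _, h3⟩ := ih hwφ _ (snoc_injective ha hc)
      refine le_trans (Finset.inf_le (hmemF c hc)) ?_
      refine le_trans h3 (sup_le_sup_right ?_ δ)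
      exact fEval_mono δ φ _ _ (hDown sel c hcle hcsmall)

end MainLemma
/-- Let `K` be a (possibly infinite) lattice semiring without
divisors of `0`, let `δ > 0` and let `π` be a `K`-interpretation with the
`(k,δ)`-extension property.  Then for every formula `ψ ∈ FO^k` (in NNF with
excluding quantifiers) and every tuple `ā` of distinct elements, either
`f^δ_ψ[ρ^π_ā] = π⟦ψ(ā)⟧ = 0`, or both are nonzero and
`f^δ_ψ[ρ^π_ā] ≤ π⟦ψ(ā)⟧ ⊔ δ ≤ f^δ_ψ[ρ^π_ā] ⊔ δ`. -/
theorem statement_4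
    {R : Type} [Fintype R] [DecidableEq R] {ar : R → ℕ}
    {K : Type} [DistribLattice K] [BoundedOrder K]
    (hnzd : ∀ a b : K, a ⊓ b = ⊥ → a = ⊥ ∨ b = ⊥)
    {A : Type} [Fintype A] [DecidableEq A]
    (k : ℕ) (δ : K) (hδ : ⊥ < δ)
    (π : Lit R ar A → K) (hmd : ModelDefining (⊥ : K) π) (hext : ExtPropKD π k δ)
    {i : ℕ} (ψ : FOx R ar i) (hw : ψ.width ≤ k)
    (a : Fin i → A) (ha : Function.Injective a) :
    (fEval δ ψ (typeOf π a) = ⊥ ∧ evalLx π ψ a = ⊥) ∨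
    (fEval δ ψ (typeOf π a) ≠ ⊥ ∧ evalLx π ψ a ≠ ⊥ ∧
      fEval δ ψ (typeOf π a) ≤ evalLx π ψ a ⊔ δ ∧
      evalLx π ψ a ⊔ δ ≤ fEval δ ψ (typeOf π a) ⊔ δ) := by
  obtain ⟨hiff, h1, h2⟩ := key_lemma hnzd k δ hδ π hmd hext ψ hw a ha
  by_cases hF : fEval δ ψ (typeOf π a) = ⊥
  · exact Or.inl ⟨hF, hiff.mp hF⟩
  · exact Or.inr ⟨hF, fun hE => hF (hiff.mpr hE), h1, sup_le h2 le_sup_right⟩
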